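/- arXiv:2506.18313 — 4 statements merged into one kernel-verified Lean document; each statement's English description precedes it below -/
import Mathlib

section
/- Let T_0 > 0, θ ∈ (0, 1/2), a_n = (T_0)_n/(θ+T_0)_n and v_n = ∑_{j=1}^n a_j². Then v_n / n^{1-2θ} converges to Γ²(θ+T_0)/((1-2θ)Γ²(T_0)) as n → ∞. -/
open Real Filter Finset

/-- Pochhammer symbol `(x)_n = Γ(x+n)/Γ(x)`. -/
noncomputable def poch (x : ℝ) (n : ℕ) : ℝ := Real.Gamma (x + n) / Real.Gamma x

lemma aux_gamma_prod (x : ℝ) (hx : 0 < x) (n : ℕ) :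
    Real.Gamma (x + n) = Real.Gamma x * ∏ j ∈ Finset.range n, (x + j) := by
  induction n with
  | zero => simp
  | succ n ih =>
    have hxn : x + (n:ℝ) ≠ 0 := by positivity
    have : x + ((n:ℕ)+1 : ℕ) = (x + n) + 1 := by push_cast; ring
    rw [this, Real.Gamma_add_one hxn, ih, Finset.prod_range_succ]
    ring

lemma aux_tendstoB (T₀ θ : ℝ) (hT : 0 < T₀) (hθ0 : 0 < θ) :
    Tendsto (fun n : ℕ => (n:ℝ)^θ *
        ((∏ j ∈ Finset.range (n+1), (T₀ + j)) / (∏ j ∈ Finset.range (n+1), (θ + T₀ + j))))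
      atTop (nhds (Real.Gamma (θ + T₀) / Real.Gamma T₀)) := by
  have hG : Real.Gamma T₀ ≠ 0 := (Real.Gamma_pos_of_pos hT).ne'
  have h := (Real.GammaSeq_tendsto_Gamma (θ + T₀)).div (Real.GammaSeq_tendsto_Gamma T₀) hG
  refine h.congr' ?_
  filter_upwards [eventually_gt_atTop 0] with n hn
  have hn' : (0:ℝ) < (n:ℝ) := by exact_mod_cast hn
  have hPT : (0:ℝ) < ∏ j ∈ Finset.range (n+1), (T₀ + j) :=
    Finset.prod_pos fun j _ => by positivity
  have hPθ : (0:ℝ) < ∏ j ∈ Finset.range (n+1), (θ + T₀ + j) :=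
    Finset.prod_pos fun j _ => by positivity
  have hfact : (0:ℝ) < (n.factorial : ℝ) := by exact_mod_cast n.factorial_pos
  have hrpow : (n:ℝ) ^ (θ + T₀) = (n:ℝ)^θ * (n:ℝ)^T₀ := Real.rpow_add hn' θ T₀
  unfold Real.GammaSeq
  simp only [Pi.div_apply]
  rw [hrpow]
  field_simp

lemma aux_tendstoC (p : ℝ) (hp0 : 0 < p) :
    Tendsto (fun j : ℕ => (j:ℝ)^(1-p) * (((j:ℝ)+1)^p - (j:ℝ)^p)) atTop (nhds p) := by
  have hD : HasDerivAt (fun x : ℝ => x ^ p) (p * (1:ℝ) ^ (p - 1)) 1 :=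
    Real.hasDerivAt_rpow_const (Or.inl one_ne_zero)
  rw [Real.one_rpow, mul_one] at hD
  have hslope := hasDerivAt_iff_tendsto_slope.mp hD
  have hg : Tendsto (fun j : ℕ => 1 + 1/(j:ℝ)) atTop (nhdsWithin 1 {x | x ≠ 1}) := by
    rw [tendsto_nhdsWithin_iff]
    constructor
    · have : Tendsto (fun n : ℕ => 1 / (n:ℝ)) atTop (nhds 0) := tendsto_one_div_atTop_nhds_zero_nat
      simpa using (tendsto_const_nhds (x := (1:ℝ))).add this
    · filter_upwards [eventually_gt_atTop 0] with j hj
      have h0 : (0:ℝ) < 1/(j:ℝ) := by positivity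
      show (1:ℝ) + 1/(j:ℝ) ≠ 1
      nlinarith
  have h := hslope.comp hg
  refine h.congr' ?_
  filter_upwards [eventually_gt_atTop 0] with j hj
  have hj' : (0:ℝ) < (j:ℝ) := by exact_mod_cast hj
  have h1 : ((j:ℝ)+1)^p = (j:ℝ)^p * (1 + 1/(j:ℝ))^p := by
    rw [← Real.mul_rpow hj'.le (by positivity)]
    rw [mul_add, mul_one_div, mul_one, div_self hj'.ne']
  have h2 : (j:ℝ)^(1-p) * (j:ℝ)^p = (j:ℝ) := by
    rw [← Real.rpow_add hj']
    simp
  have hne : (1:ℝ) + 1/(j:ℝ) - 1 ≠ 0 := by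
    have h0 : (0:ℝ) < 1/(j:ℝ) := by positivity
    intro h; nlinarith
  simp only [Function.comp_apply, slope_def_field, Real.one_rpow]
  rw [show (1:ℝ)+1/(j:ℝ)-1 = 1/(j:ℝ) by ring, div_div_eq_mul_div, div_one, h1, mul_sub, ← mul_assoc, h2]
  ring

theorem vn_asymptotics_subcritical (T₀ θ : ℝ) (hT : 0 < T₀)
    (hθ : θ ∈ Set.Ioo (0:ℝ) (1/2))
    (a : ℕ → ℝ) (ha : ∀ n, a n = poch T₀ n / poch (θ + T₀) n)
    (v : ℕ → ℝ) (hv : ∀ n, v n = ∑ j ∈ Finset.Icc 1 n, (a j) ^ 2) :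
    Tendsto (fun n : ℕ => v n / (n : ℝ) ^ (1 - 2 * θ)) atTop
      (nhds (Real.Gamma (θ + T₀) ^ 2 / ((1 - 2 * θ) * Real.Gamma T₀ ^ 2))) := by
  obtain ⟨hθ0, hθ2⟩ := hθ
  set p : ℝ := 1 - 2 * θ with hpdef
  have hp0 : 0 < p := by simp only [hpdef]; linarith
  have hθT : 0 < θ + T₀ := by linarith
  set C : ℝ := Real.Gamma (θ + T₀) / Real.Gamma T₀ with hCdef
  -- a in product form
  have hpoch : ∀ (x : ℝ), 0 < x → ∀ n, poch x n = ∏ j ∈ Finset.range n, (x + j) := by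
    intro x hx n
    rw [poch, aux_gamma_prod x hx n]
    field_simp
  have haprod : ∀ n, a n =
      (∏ j ∈ Finset.range n, (T₀ + j)) / (∏ j ∈ Finset.range n, (θ + T₀ + j)) := by
    intro n; rw [ha, hpoch T₀ hT, hpoch (θ + T₀) hθT]
  -- step B
  have hB : Tendsto (fun n : ℕ => (n:ℝ)^θ * a (n+1)) atTop (nhds C) := by
    refine (aux_tendstoB T₀ θ hT hθ0).congr fun n => ?_
    rw [haprod]
  -- squared
  have hB2 : Tendsto (fun n : ℕ => (n:ℝ)^(1-p) * (a (n+1))^2) atTop (nhds (C^2)) := by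
    have := hB.mul hB
    rw [← sq] at this
    refine this.congr' ?_
    filter_upwards [eventually_gt_atTop 0] with n hn
    have hn' : (0:ℝ) < (n:ℝ) := by exact_mod_cast hn
    have : (n:ℝ)^(1-p) = (n:ℝ)^θ * (n:ℝ)^θ := by
      rw [← Real.rpow_add hn']
      norm_num [hpdef]
      ring_nf
    rw [this]; ring
  -- d and its asymptotics
  set d : ℕ → ℝ := fun j => ((j:ℝ)+1)^p - (j:ℝ)^p with hddef
  have hdpos : ∀ j, 0 < d j := by
    intro j
    have : (j:ℝ)^p < ((j:ℝ)+1)^p :=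
      Real.rpow_lt_rpow (Nat.cast_nonneg j) (by linarith) hp0
    simp only [hddef]; linarith
  have hC : Tendsto (fun j : ℕ => (j:ℝ)^(1-p) * d j) atTop (nhds p) := aux_tendstoC p hp0
  -- ratio
  have hD : Tendsto (fun j : ℕ => a (j+1)^2 / d j) atTop (nhds (C^2 / p)) := by
    refine ((hB2.div hC hp0.ne')).congr' ?_
    filter_upwards [eventually_gt_atTop 0] with j hj
    have hj' : (0:ℝ) < (j:ℝ) := by exact_mod_cast hj
    have hne : (j:ℝ)^(1-p) ≠ 0 := (Real.rpow_pos_of_pos hj' _).ne'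
    simp only [Pi.div_apply]
    rw [mul_div_mul_left _ _ hne]
  -- littleO
  set f : ℕ → ℝ := fun j => a (j+1)^2 - (C^2/p) * d j with hfdef
  have hfo : f =o[atTop] d := by
    rw [Asymptotics.isLittleO_iff_tendsto fun j h => absurd h (hdpos j).ne']
    have := hD.sub_const (C^2/p)
    rw [sub_self] at this
    refine this.congr fun j => ?_
    simp only [hfdef]
    rw [sub_div, mul_div_assoc, div_self (hdpos j).ne', mul_one]
  -- telescoping sum
  have hsum : ∀ n : ℕ, ∑ i ∈ Finset.range n, d i = (n:ℝ)^p := by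
    intro n
    have h := Finset.sum_range_sub (fun i : ℕ => (i:ℝ)^p) n
    calc ∑ i ∈ Finset.range n, d i
        = ∑ i ∈ Finset.range n, ((((i+1:ℕ)):ℝ)^p - ((i:ℕ):ℝ)^p) := by
          refine Finset.sum_congr rfl fun i _ => ?_
          simp only [hddef]; push_cast; ring_nf
      _ = ((n:ℝ))^p - (((0:ℕ)):ℝ)^p := h
      _ = (n:ℝ)^p := by simp [Real.zero_rpow hp0.ne']
  have htop : Tendsto (fun n : ℕ => ∑ i ∈ Finset.range n, d i) atTop atTop := by
    simp only [hsum]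
    exact (tendsto_rpow_atTop hp0).comp tendsto_natCast_atTop_atTop
  have hS := hfo.sum_range (fun j => (hdpos j).le) htop
  simp only [hsum] at hS
  -- sum of f
  have hsumf : ∀ n : ℕ, ∑ i ∈ Finset.range n, f i = v n - (C^2/p) * (n:ℝ)^p := by
    intro n
    simp only [hfdef]
    rw [Finset.sum_sub_distrib, ← Finset.mul_sum, hsum, hv]
    congr 1
    rw [← Finset.Ico_add_one_right_eq_Icc, Finset.sum_Ico_eq_sum_range]
    have hnn : n + 1 - 1 = n := rfl
    rw [hnn]
    exact Finset.sum_congr rfl fun i _ => by rw [add_comm 1 i]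
  -- conclude
  have hzero : Tendsto (fun n : ℕ => (v n - (C^2/p) * (n:ℝ)^p) / (n:ℝ)^p) atTop (nhds 0) := by
    have := (Asymptotics.isLittleO_iff_tendsto' ?_).mp hS
    · refine this.congr' ?_
      filter_upwards [eventually_gt_atTop 0] with n hn
      rw [hsumf]
    · filter_upwards [eventually_gt_atTop 0] with n hn h
      exact absurd h (Real.rpow_pos_of_pos (by exact_mod_cast hn) _).ne'
  have hfinal : Tendsto (fun n : ℕ => v n / (n:ℝ)^p) atTop (nhds (C^2/p)) := by
    have := hzero.add_const (C^2/p)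
    rw [zero_add] at this
    refine this.congr' ?_
    filter_upwards [eventually_gt_atTop 0] with n hn
    have hn' : ((n:ℝ))^p ≠ 0 := (Real.rpow_pos_of_pos (by exact_mod_cast hn) _).ne'
    field_simp
    ring
  have hgoal : C^2/p = Real.Gamma (θ + T₀) ^ 2 / ((1 - 2 * θ) * Real.Gamma T₀ ^ 2) := by
    rw [hCdef, div_pow, div_div, hpdef]
    ring_nf
  rw [← hgoal]
  exact hfinal
end

section
/- Let T_0 > 0, θ = 1/2, a_n = (T_0)_n/(1/2+T_0)_n and v_n = ∑_{j=1}^n a_j². Then v_n / log n converges to Γ²(T_0 + 1/2)/Γ²(T_0) as n → ∞. -/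
open Real Filter Finset

open Topology Nat


-- harmonic sum H over Icc 1 n, as real
noncomputable def Hs (n : ℕ) : ℝ := ∑ j ∈ Finset.Icc 1 n, (j : ℝ)⁻¹

lemma Hs_eq (n : ℕ) : Hs n = (harmonic n : ℝ) := by
  rw [Hs, harmonic_eq_sum_Icc]
  push_cast
  rfl

lemma tendsto_log_nat : Tendsto (fun n : ℕ => Real.log n) atTop atTop :=
  Real.tendsto_log_atTop.comp tendsto_natCast_atTop_atTop

lemma Hs_atTop : Tendsto Hs atTop atTop := by
  have h1 : Tendsto (fun n : ℕ => ∑ i ∈ range n, (i : ℝ)⁻¹) atTop atTop := by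
    rw [← not_summable_iff_tendsto_nat_atTop_of_nonneg (fun n => by positivity)]
    exact Real.not_summable_natCast_inv
  have h2 : ∀ n : ℕ, Hs n = ∑ i ∈ range (n+1), (i : ℝ)⁻¹ := by
    intro n
    rw [← Finset.sum_range_add_sum_Ico _ (Nat.le_add_left 1 n)]
    simp [Hs, Finset.Ico_add_one_right_eq_Icc]
  exact (h1.comp (tendsto_add_atTop_nat 1)).congr (fun n => (h2 n).symm)

lemma Hs_div_log : Tendsto (fun n : ℕ => Hs n / Real.log n) atTop (𝓝 1) := by
  have hconv : Tendsto (fun n : ℕ => Hs n - Real.log n) atTop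
      (𝓝 (Real.eulerMascheroniConstant + 0)) := by
    have h1 : Tendsto (fun n : ℕ => Hs n - Real.log (n+1)) atTop
        (𝓝 Real.eulerMascheroniConstant) := by
      refine Real.tendsto_harmonic_sub_log_add_one.congr (fun n => ?_)
      rw [Hs_eq]
    have h2 := Real.tendsto_log_nat_add_one_sub_log
    exact (h1.add h2).congr (fun n => by ring)
  rw [add_zero] at hconv
  have h0 : Tendsto (fun n : ℕ => (Hs n - Real.log n) / Real.log n) atTop (𝓝 0) :=
    hconv.div_atTop tendsto_log_nat
  have := h0.const_add 1
  rw [add_zero] at this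
  refine this.congr' ?_
  filter_upwards [eventually_ge_atTop 2] with n hn
  have hlog : Real.log n ≠ 0 := by
    have : (1:ℝ) < n := by exact_mod_cast Nat.lt_of_lt_of_le one_lt_two hn
    exact (Real.log_pos this).ne'
  field_simp
  ring

/-- If `n * b n → C` then `(∑_{j=1}^n b j)/log n → C`. -/
lemma sum_div_log_tendsto (b : ℕ → ℝ) (C : ℝ)
    (hb : Tendsto (fun n : ℕ => (n : ℝ) * b n) atTop (𝓝 C)) :
    Tendsto (fun n : ℕ => (∑ j ∈ Finset.Icc 1 n, b j) / Real.log n) atTop (𝓝 C) := by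
  set S : ℕ → ℝ := fun n => ∑ j ∈ Finset.Icc 1 n, b j with hS
  set f : ℕ → ℝ := fun j => if j = 0 then 0 else b j - C * (j:ℝ)⁻¹ with hf
  set g : ℕ → ℝ := fun j => (j:ℝ)⁻¹ with hg
  have hgnn : ∀ j, 0 ≤ g j := fun j => by positivity
  have hgsum : Tendsto (fun n => ∑ i ∈ range n, g i) atTop atTop := by
    rw [← not_summable_iff_tendsto_nat_atTop_of_nonneg hgnn]
    exact Real.not_summable_natCast_inv
  have hfo : f =o[atTop] g := by
    rw [Asymptotics.isLittleO_iff]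
    intro ε hε
    have := Metric.tendsto_atTop.mp hb ε hε
    obtain ⟨N, hN⟩ := this
    filter_upwards [eventually_ge_atTop (max N 1)] with n hn
    have hn1 : 1 ≤ n := le_trans (le_max_right N 1) hn
    have hnN : N ≤ n := le_trans (le_max_left N 1) hn
    have hne : n ≠ 0 := Nat.one_le_iff_ne_zero.mp hn1
    have hd := hN n hnN
    rw [Real.dist_eq] at hd
    have hfeq : f n = ((n:ℝ) * b n - C) * (n:ℝ)⁻¹ := by
      simp only [hf, if_neg hne]
      have : (n:ℝ) ≠ 0 := Nat.cast_ne_zero.mpr hne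
      field_simp
    rw [hfeq]
    simp only [hg, norm_mul, Real.norm_eq_abs]
    rw [abs_inv, Nat.abs_cast]
    gcongr
  have hsum := (hfo.sum_range hgnn hgsum).comp_tendsto (tendsto_add_atTop_nat 1)
  have hfsum : ∀ n : ℕ, ∑ i ∈ range (n+1), f i = S n - C * Hs n := by
    intro n
    rw [← Finset.sum_range_add_sum_Ico _ (Nat.le_add_left 1 n)]
    simp only [hf, Finset.sum_range_one, if_pos rfl, zero_add, Finset.Ico_add_one_right_eq_Icc]
    rw [Finset.sum_ite_of_false (by intro i hi; exact Nat.one_le_iff_ne_zero.mp (Finset.mem_Icc.mp hi).1)]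
    rw [Finset.sum_sub_distrib, ← Finset.mul_sum]
    simp [hS, Hs]
  have hgsum2 : ∀ n : ℕ, ∑ i ∈ range (n+1), g i = Hs n := by
    intro n
    rw [← Finset.sum_range_add_sum_Ico _ (Nat.le_add_left 1 n)]
    simp [hg, Hs, Finset.Ico_add_one_right_eq_Icc]
  have ho : (fun n => S n - C * Hs n) =o[atTop] Hs := by
    refine (hsum.congr' ?_ ?_)
    · exact Eventually.of_forall (fun n => hfsum n)
    · exact Eventually.of_forall (fun n => hgsum2 n)
  have h0 : Tendsto (fun n => (S n - C * Hs n) / Hs n) atTop (𝓝 0) :=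
    ho.tendsto_div_nhds_zero
  have hfinal : Tendsto (fun n => C * (Hs n / Real.log n) +
      ((S n - C * Hs n) / Hs n) * (Hs n / Real.log n)) atTop (𝓝 (C * 1 + 0 * 1)) :=
    ((Hs_div_log.const_mul C).add (h0.mul Hs_div_log))
  rw [mul_one, zero_mul, add_zero] at hfinal
  refine hfinal.congr' ?_
  filter_upwards [eventually_ge_atTop 2] with n hn
  have hHpos : 0 < Hs n := by
    rw [Hs_eq]
    exact_mod_cast harmonic_pos (by omega)
  have hlog : Real.log n ≠ 0 := by
    have : (1:ℝ) < n := by exact_mod_cast Nat.lt_of_lt_of_le one_lt_two hn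
    exact (Real.log_pos this).ne'
  field_simp
  simp only [hS]
  ring

lemma poch_eq_prod {x : ℝ} (hx : 0 < x) (n : ℕ) :
    poch x n = ∏ j ∈ range n, (x + j) := by
  induction n with
  | zero => simp [poch, div_self (Real.Gamma_pos_of_pos hx).ne']
  | succ n ih =>
    rw [prod_range_succ, ← ih, poch, poch]
    have hxn : x + n ≠ 0 := by positivity
    have h : x + (n+1 : ℕ) = (x + n) + 1 := by push_cast; ring
    rw [h, Real.Gamma_add_one hxn]
    field_simp

lemma prod_pos_poch {x : ℝ} (hx : 0 < x) (n : ℕ) : 0 < ∏ j ∈ range n, (x + (j:ℝ)) :=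
  Finset.prod_pos (fun j _ => by positivity)

lemma gammaSeq_eq {x : ℝ} (n : ℕ) :
    Real.GammaSeq x n = (n:ℝ) ^ x * (n ! : ℝ) / ((∏ j ∈ range n, (x + j)) * (x + n)) := by
  rw [Real.GammaSeq, prod_range_succ]

lemma key_tendsto (T₀ : ℝ) (hT : 0 < T₀) (a : ℕ → ℝ)
    (ha : ∀ n, a n = poch T₀ n / poch (1/2 + T₀) n) :
    Tendsto (fun n : ℕ => (n : ℝ) * a n ^ 2) atTop
      (𝓝 (Real.Gamma (T₀ + 1/2) ^ 2 / Real.Gamma T₀ ^ 2)) := by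
  set T' : ℝ := 1/2 + T₀ with hT'
  have hT'pos : 0 < T' := by positivity
  set q : ℕ → ℝ := fun n =>
    Real.GammaSeq T' n / Real.GammaSeq T₀ n * ((T' + n) / (T₀ + n)) with hq
  have hratio : Tendsto (fun n : ℕ => (T' + n) / (T₀ + n)) atTop (𝓝 1) := by
    have hd : Tendsto (fun n : ℕ => (1/2 : ℝ) / (T₀ + n)) atTop (𝓝 0) := by
      apply Tendsto.div_atTop tendsto_const_nhds
      exact tendsto_atTop_add_const_left _ _ tendsto_natCast_atTop_atTop
    have := hd.const_add 1
    rw [add_zero] at this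
    refine this.congr (fun n => ?_)
    have : T₀ + (n:ℝ) ≠ 0 := by positivity
    field_simp
    ring
  have hqlim : Tendsto q atTop (𝓝 (Real.Gamma T' / Real.Gamma T₀ * 1)) :=
    ((Real.GammaSeq_tendsto_Gamma T').div (Real.GammaSeq_tendsto_Gamma T₀)
      (Real.Gamma_pos_of_pos hT).ne').mul hratio
  have hq2 : Tendsto (fun n => q n ^ 2) atTop
      (𝓝 (Real.Gamma (T₀ + 1/2) ^ 2 / Real.Gamma T₀ ^ 2)) := by
    have := hqlim.pow 2
    rw [mul_one, div_pow, hT', add_comm (1/2 : ℝ) T₀] at this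
    exact this
  refine hq2.congr' ?_
  filter_upwards [eventually_ge_atTop 1] with n hn
  have hnpos : (0:ℝ) < n := by exact_mod_cast hn
  -- q n = √n * a n
  have hqa : q n = Real.sqrt n * a n := by
    simp only [hq, ha n, poch_eq_prod hT, poch_eq_prod hT'pos, gammaSeq_eq]
    have hP1 : (0:ℝ) < ∏ j ∈ range n, (T₀ + (j:ℝ)) := prod_pos_poch hT n
    have hP2 : (0:ℝ) < ∏ j ∈ range n, (T' + (j:ℝ)) := prod_pos_poch hT'pos n
    have h1 : (0:ℝ) < T₀ + n := by positivity
    have h2 : (0:ℝ) < T' + n := by positivity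
    have h3 : (0:ℝ) < (n:ℝ) ^ T₀ := Real.rpow_pos_of_pos hnpos _
    have h4 : (0:ℝ) < (n ! : ℝ) := by exact_mod_cast n.factorial_pos
    have h5 : (n:ℝ) ^ T' = Real.sqrt n * (n:ℝ) ^ T₀ := by
      rw [hT', Real.rpow_add hnpos, Real.sqrt_eq_rpow]
    rw [h5]
    field_simp
  rw [hqa, mul_pow, Real.sq_sqrt hnpos.le]

theorem vn_asymptotics_critical (T₀ : ℝ) (hT : 0 < T₀)
    (a : ℕ → ℝ) (ha : ∀ n, a n = poch T₀ n / poch (1/2 + T₀) n)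
    (v : ℕ → ℝ) (hv : ∀ n, v n = ∑ j ∈ Finset.Icc 1 n, (a j) ^ 2) :
    Tendsto (fun n : ℕ => v n / Real.log n) atTop
      (nhds (Real.Gamma (T₀ + 1/2) ^ 2 / Real.Gamma T₀ ^ 2)) := by
  have hb := key_tendsto T₀ hT a ha
  have h := sum_div_log_tendsto (fun n => a n ^ 2) _ hb
  exact h.congr (fun n => by rw [hv n])
end

section
/- In the random-trend diffusion model, the expected number of A-adopters satisfies E[N_n] = ((θ+T_0)_n/(T_0)_n)(N_0 - aT_0/(1-θ)) + (a/(1-θ)) T_n for all n ≥ 1, where θ ≠ 1. -/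
open MeasureTheory Finset

theorem expected_Nn
    {Ω : Type*} {m0 : MeasurableSpace Ω} (μ : Measure Ω) [IsProbabilityMeasure μ]
    (F : Filtration ℕ m0)
    (X N : ℕ → Ω → ℝ) (a θ N₀ M₀ : ℝ)
    (hN₀ : 0 < N₀) (hM₀ : 0 < M₀) (hθ : θ ∈ Set.Ioo (-1:ℝ) 1)
    (T : ℕ → ℝ) (hT : ∀ n, T n = n + (N₀ + M₀))
    (hval : ∀ n ω, X n ω = 0 ∨ X n ω = 1)
    (hadapted : ∀ n, Measurable[F n] (N n))
    (hN0 : ∀ ω, N 0 ω = N₀)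
    (hrec : ∀ n ω, N (n + 1) ω = N n ω + X (n + 1) ω)
    (hint : ∀ n, Integrable (N n) μ)
    (hrange : ∀ n ω, a + θ * N n ω / T n ∈ Set.Icc (0:ℝ) 1)
    (hcond : ∀ n, μ[X (n + 1) | F n] =ᵐ[μ] fun ω => a + θ * N n ω / T n)
    (n : ℕ) (hn : 1 ≤ n) :
    ∫ ω, N n ω ∂μ
      = poch (θ + (N₀ + M₀)) n / poch (N₀ + M₀) n
          * (N₀ - a * (N₀ + M₀) / (1 - θ)) + a / (1 - θ) * T n := by
  set T0 : ℝ := N₀ + M₀ with hT0def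
  have hT0 : 0 < T0 := by positivity
  have hθ1 : θ < 1 := hθ.2
  have hθm1 : -1 < θ := hθ.1
  have h1θ : (1 : ℝ) - θ ≠ 0 := by linarith
  have hTpos : ∀ k : ℕ, 0 < T k := by
    intro k
    rw [hT k]
    positivity
  -- key recurrence for the expectations
  have key : ∀ k : ℕ, ∫ ω, N (k+1) ω ∂μ = (1 + θ / T k) * ∫ ω, N k ω ∂μ + a := by
    intro k
    have hXint : Integrable (X (k+1)) μ := by
      have : X (k+1) = fun ω => N (k+1) ω - N k ω := by
        funext ω; rw [hrec k ω]; ring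
      rw [this]
      exact (hint (k+1)).sub (hint k)
    have hXval : ∫ ω, X (k+1) ω ∂μ = a + θ / T k * ∫ ω, N k ω ∂μ := by
      have h1 : ∫ ω, X (k+1) ω ∂μ = ∫ ω, (μ[X (k + 1) | F k]) ω ∂μ :=
        (integral_condExp (F.le k)).symm
      have h2 : ∫ ω, (μ[X (k + 1) | F k]) ω ∂μ
          = ∫ ω, (a + θ * N k ω / T k) ∂μ := integral_congr_ae (hcond k)
      have h3 : (fun ω => a + θ * N k ω / T k)
          = fun ω => a + (θ / T k) * N k ω := by
        funext ω; ring
      rw [h1, h2, h3, integral_add (integrable_const a) ((hint k).const_mul (θ / T k)),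
        integral_const_mul, integral_const]
      simp
    have : ∫ ω, N (k+1) ω ∂μ = ∫ ω, N k ω ∂μ + ∫ ω, X (k+1) ω ∂μ := by
      have h : (fun ω => N (k+1) ω) = fun ω => N k ω + X (k+1) ω := by
        funext ω; exact hrec k ω
      rw [h, integral_add (hint k) hXint]
    rw [this, hXval]; ring
  have hE0 : ∫ ω, N 0 ω ∂μ = N₀ := by
    have : (fun ω => N 0 ω) = fun _ => N₀ := by funext ω; exact hN0 ω
    rw [this, integral_const]; simp
  have hΓT0 : Real.Gamma T0 ≠ 0 := (Real.Gamma_pos_of_pos hT0).ne'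
  have hpochT0 : ∀ k : ℕ, 0 < poch T0 k := by
    intro k
    have : (0:ℝ) < T0 + k := by positivity
    exact div_pos (Real.Gamma_pos_of_pos this) (Real.Gamma_pos_of_pos hT0)
  have hpochT0succ : ∀ k : ℕ, poch T0 (k+1) = poch T0 k * (T0 + k) := by
    intro k
    have hne : T0 + (k:ℝ) ≠ 0 := by positivity
    unfold poch
    have : T0 + ((k:ℕ)+1 : ℕ) = (T0 + k) + 1 := by push_cast; ring
    rw [this, Real.Gamma_add_one hne]
    field_simp
  by_cases hz : θ + T0 = 0
  · -- degenerate case: poch (θ+T0) k = 0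
    have hΓ0 : Real.Gamma (θ + T0) = 0 := by rw [hz, Real.Gamma_zero]
    have hpz : ∀ k : ℕ, poch (θ + T0) k = 0 := by
      intro k; unfold poch; rw [hΓ0, div_zero]
    rw [hpz n, zero_div, zero_mul, zero_add]
    induction n, hn using Nat.le_induction with
    | base =>
      rw [key 0, hE0]
      have hT0' : T 0 = T0 := by rw [hT 0]; push_cast; ring
      have h1 : 1 + θ / T 0 = 0 := by
        rw [hT0']
        field_simp
        linarith
      rw [h1, zero_mul, zero_add, hT 1]
      have h2 : (1:ℝ) - θ = 1 + T0 := by linarith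
      rw [h2]
      have hne : (1:ℝ) + T0 ≠ 0 := by positivity
      push_cast
      field_simp
    | succ k hk ih =>
      rw [key k, ih, hT k, hT (k+1)]
      have hne : (k:ℝ) + T0 ≠ 0 := by positivity
      field_simp
      push_cast
      ring
  · -- nondegenerate case
    have hθT0 : ∀ k : ℕ, θ + T0 + (k:ℝ) ≠ 0 := by
      intro k
      cases k with
      | zero => simpa using hz
      | succ m =>
        have : (0:ℝ) < θ + T0 + (m+1 : ℕ) := by push_cast; linarith [Nat.cast_nonneg (α := ℝ) m]
        exact this.ne'
    have hΓθ : Real.Gamma (θ + T0) ≠ 0 := by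
      intro h
      obtain ⟨m, hm⟩ := (Real.Gamma_eq_zero_iff _).mp h
      have h1 : (m:ℝ) < 1 := by linarith [Nat.cast_nonneg (α := ℝ) m]
      have h2 : m = 0 := by exact_mod_cast Nat.lt_one_iff.mp (by exact_mod_cast h1)
      rw [h2] at hm
      simp at hm
      exact hz hm
    have hpoch0 : poch (θ + T0) 0 = 1 := by
      unfold poch; simp [hΓθ]
    have hpochT00 : poch T0 0 = 1 := by
      unfold poch; simp [hΓT0]
    have hpochsucc : ∀ k : ℕ, poch (θ + T0) (k+1) = poch (θ + T0) k * (θ + T0 + k) := by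
      intro k
      unfold poch
      have : θ + T0 + ((k:ℕ)+1 : ℕ) = (θ + T0 + k) + 1 := by push_cast; ring
      rw [this, Real.Gamma_add_one (hθT0 k)]
      field_simp
    clear hn
    induction n with
    | zero =>
      rw [hE0, hpoch0, hpochT00, hT 0]
      field_simp
      all_goals ring
    | succ k ih =>
      rw [key k, ih, hpochsucc k, hpochT0succ k, hT k, hT (k+1)]
      have hne1 : (k:ℝ) + T0 ≠ 0 := by positivity
      have hne2 : poch T0 k ≠ 0 := (hpochT0 k).ne'
      field_simp
      push_cast
      all_goals ring
end

section
/- Suppose the sequence of random variables n^{1-θ}(N_n/T_n - a/(1-θ)) converges almost surely to a random variable W, where θ ∈ (1/2,1), T_n = n + T_0. Then n^{1-θ}(C_n/n - (a/(1-θ) - 1/2)) converges almost surely to 2W/(1+θ), where C_n = (1/n) ∑_{i=1}^n (N_i - M_i) and M_n = T_n - N_n. -/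
open Filter Finset MeasureTheory

private lemma aux_sum_pow (θ : ℝ) (hθ0 : 0 < θ) :
    Tendsto (fun n : ℕ => (∑ i ∈ Finset.Icc 1 n, (i:ℝ)^θ) / (n:ℝ)^(1+θ)) atTop
      (nhds (1/(1+θ))) := by
  have h1θ : (0:ℝ) < 1 + θ := by linarith
  have hmono : ∀ n : ℕ, MonotoneOn (fun x : ℝ => x ^ θ) (Set.Icc 0 ((0:ℝ) + n)) := by
    intro n x hx y hy hxy
    exact Real.rpow_le_rpow hx.1 hxy hθ0.le
  have hint : ∀ n : ℕ, ∫ x in (0:ℝ)..((0:ℝ)+n), x ^ θ = (n:ℝ)^(1+θ) / (1+θ) := by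
    intro n
    rw [integral_rpow (Or.inl (by linarith))]
    rw [Real.zero_rpow (by linarith), add_comm θ 1]
    ring_nf
  have hIcc : ∀ n : ℕ, ∑ i ∈ Finset.Icc 1 n, (i:ℝ)^θ
      = ∑ i ∈ Finset.range n, (((1+i : ℕ)):ℝ)^θ := by
    intro n
    rw [← Finset.Ico_add_one_right_eq_Icc, Finset.sum_Ico_eq_sum_range]
    simp
  have hlow : ∀ n : ℕ, (n:ℝ)^(1+θ) / (1+θ) ≤ ∑ i ∈ Finset.Icc 1 n, (i:ℝ)^θ := by
    intro n
    have h := (hmono n).integral_le_sum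
    rw [hint n] at h
    refine h.trans_eq ?_
    rw [hIcc n]
    apply Finset.sum_congr rfl
    intro i _
    norm_num [add_comm]
  have hup : ∀ n : ℕ, ∑ i ∈ Finset.Icc 1 n, (i:ℝ)^θ
      ≤ (n:ℝ)^(1+θ) / (1+θ) + (n:ℝ)^θ := by
    intro n
    have h2 := (hmono n).sum_le_integral
    rw [hint n] at h2
    have h3 : ∑ i ∈ Finset.Icc 1 n, (i:ℝ)^θ
        = (∑ i ∈ Finset.range n, ((0:ℝ) + (i:ℕ))^θ) + (n:ℝ)^θ := by
      rw [hIcc n]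
      have h5 : ∑ i ∈ Finset.range (n+1), ((i:ℕ):ℝ)^θ
          = ∑ i ∈ Finset.range n, (((i+1:ℕ)):ℝ)^θ + (((0:ℕ)):ℝ)^θ :=
        Finset.sum_range_succ' _ n
      rw [Finset.sum_range_succ] at h5
      have e : ∑ i ∈ Finset.range n, (((1+i : ℕ)):ℝ)^θ
          = ∑ i ∈ Finset.range n, (((i+1 : ℕ)):ℝ)^θ := by
        apply Finset.sum_congr rfl; intro i _; rw [add_comm]
      rw [e]
      have h0 : (((0:ℕ)):ℝ)^θ = 0 := by
        norm_num; exact Real.zero_rpow hθ0.ne'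
      rw [h0, add_zero] at h5
      have e2 : ∑ i ∈ Finset.range n, ((0:ℝ) + (i:ℕ))^θ
          = ∑ i ∈ Finset.range n, ((i:ℕ):ℝ)^θ := by
        apply Finset.sum_congr rfl; intro i _; rw [zero_add]
      rw [e2]
      linarith [h5]
    rw [h3]
    exact add_le_add h2 le_rfl
  have hlim1 : Tendsto (fun n : ℕ => 1/(1+θ) + 1/(n:ℝ)) atTop (nhds (1/(1+θ))) := by
    have h6 := tendsto_one_div_atTop_nhds_zero_nat (𝕜 := ℝ)
    simpa using tendsto_const_nhds.add h6
  refine tendsto_of_tendsto_of_tendsto_of_le_of_le' tendsto_const_nhds hlim1 ?_ ?_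
  · filter_upwards [eventually_ge_atTop 1] with n hn
    have hn' : (0:ℝ) < (n:ℝ) := by exact_mod_cast hn
    have hp : (0:ℝ) < (n:ℝ)^(1+θ) := Real.rpow_pos_of_pos hn' _
    rw [le_div_iff₀ hp]
    calc 1/(1+θ) * (n:ℝ)^(1+θ) = (n:ℝ)^(1+θ)/(1+θ) := by ring
    _ ≤ _ := hlow n
  · filter_upwards [eventually_ge_atTop 1] with n hn
    have hn' : (0:ℝ) < (n:ℝ) := by exact_mod_cast hn
    have hp : (0:ℝ) < (n:ℝ)^(1+θ) := Real.rpow_pos_of_pos hn' _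
    rw [div_le_iff₀ hp]
    have h4 : (n:ℝ)^θ * (n:ℝ) = (n:ℝ)^(1+θ) := by
      rw [Real.rpow_add hn', Real.rpow_one]; ring
    calc ∑ i ∈ Finset.Icc 1 n, (i:ℝ)^θ ≤ (n:ℝ)^(1+θ)/(1+θ) + (n:ℝ)^θ := hup n
    _ = (1/(1+θ) + 1/(n:ℝ)) * (n:ℝ)^(1+θ) := by
        field_simp
        rw [← h4]; ring

private lemma aux_rpow_neg_lim (θ : ℝ) (hθ0 : 0 < θ) :
    Tendsto (fun n : ℕ => ((n:ℝ))^(-θ)) atTop (nhds 0) :=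
  (tendsto_rpow_neg_atTop hθ0).comp tendsto_natCast_atTop_atTop

private lemma aux_small (θ : ℝ) (hθ0 : 0 < θ) (K : ℝ) (u : ℕ → ℝ)
    (hu : ∀ i : ℕ, 1 ≤ i → |u i| ≤ K) :
    Tendsto (fun n : ℕ => (∑ i ∈ Finset.Icc 1 n, u i) / (n:ℝ)^(1+θ)) atTop (nhds 0) := by
  have hK : 0 ≤ K := le_trans (abs_nonneg _) (hu 1 le_rfl)
  have hg : Tendsto (fun n : ℕ => K * (n:ℝ)^(-θ)) atTop (nhds 0) := by
    simpa using (aux_rpow_neg_lim θ hθ0).const_mul K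
  refine squeeze_zero_norm' ?_ hg
  filter_upwards [eventually_ge_atTop 1] with n hn
  have hn' : (0:ℝ) < (n:ℝ) := by exact_mod_cast hn
  have hp : (0:ℝ) < (n:ℝ)^(1+θ) := Real.rpow_pos_of_pos hn' _
  have hb : |∑ i ∈ Finset.Icc 1 n, u i| ≤ K * n := by
    calc |∑ i ∈ Finset.Icc 1 n, u i| ≤ ∑ i ∈ Finset.Icc 1 n, |u i| :=
      Finset.abs_sum_le_sum_abs _ _
    _ ≤ ∑ i ∈ Finset.Icc 1 n, K := by
        apply Finset.sum_le_sum; intro i hi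
        exact hu i (Finset.mem_Icc.1 hi).1
    _ = K * n := by rw [Finset.sum_const, Nat.card_Icc, nsmul_eq_mul]; simp [mul_comm]
  rw [Real.norm_eq_abs, abs_div, abs_of_pos hp, div_le_iff₀ hp]
  calc |∑ i ∈ Finset.Icc 1 n, u i| ≤ K * n := hb
  _ = K * (n:ℝ)^(-θ) * (n:ℝ)^(1+θ) := by
      rw [mul_assoc, ← Real.rpow_add hn']
      norm_num

private lemma aux_toeplitz_zero (θ : ℝ) (hθ0 : 0 < θ) (K : ℝ) (hK : 0 ≤ K)
    (u z : ℕ → ℝ) (hu : ∀ i : ℕ, 1 ≤ i → |u i| ≤ K * (i:ℝ)^θ)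
    (hz : Tendsto z atTop (nhds 0)) :
    Tendsto (fun n : ℕ => (∑ i ∈ Finset.Icc 1 n, u i * z i) / (n:ℝ)^(1+θ)) atTop
      (nhds 0) := by
  rw [NormedAddCommGroup.tendsto_nhds_zero]
  intro ε hε
  set ε' : ℝ := ε / (2 * (K + 1)) with hε'def
  have hε' : 0 < ε' := by positivity
  obtain ⟨N₀, hN₀⟩ := (Metric.tendsto_atTop.1 hz) ε' hε'
  set B : ℝ := ∑ i ∈ Finset.Icc 1 N₀, |u i * z i| with hBdef
  have hBlim : Tendsto (fun n : ℕ => B / (n:ℝ)^(1+θ)) atTop (nhds 0) :=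
    tendsto_const_nhds.div_atTop
      ((tendsto_rpow_atTop (by linarith)).comp tendsto_natCast_atTop_atTop)
  have hsmall : ∀ᶠ n : ℕ in atTop, B / (n:ℝ)^(1+θ) < ε/2 := by
    have h7 := hBlim.eventually (eventually_lt_nhds (show (0:ℝ) < ε/2 by linarith))
    simpa using h7
  filter_upwards [hsmall, eventually_ge_atTop (max N₀ 1)] with n hn1 hn2
  have hnN : N₀ ≤ n := le_trans (le_max_left _ _) hn2
  have hn : 1 ≤ n := le_trans (le_max_right _ _) hn2
  have hn' : (0:ℝ) < (n:ℝ) := by exact_mod_cast hn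
  have hp : (0:ℝ) < (n:ℝ)^(1+θ) := Real.rpow_pos_of_pos hn' _
  have hbound : |∑ i ∈ Finset.Icc 1 n, u i * z i| ≤ B + ε' * K * (n:ℝ)^(1+θ) := by
    have hsplit : ∑ i ∈ Finset.Ioc 0 N₀, u i * z i + ∑ i ∈ Finset.Ioc N₀ n, u i * z i
        = ∑ i ∈ Finset.Ioc 0 n, u i * z i :=
      Finset.sum_Ioc_consecutive _ (Nat.zero_le _) hnN
    have hIcc : ∀ m : ℕ, Finset.Icc 1 m = Finset.Ioc 0 m := fun m => Finset.Icc_add_one_left_eq_Ioc 0 m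
    rw [hIcc, ← hsplit]
    have h1 : |∑ i ∈ Finset.Ioc 0 N₀, u i * z i| ≤ B := by
      rw [hBdef, hIcc]
      exact Finset.abs_sum_le_sum_abs _ _
    have h2 : |∑ i ∈ Finset.Ioc N₀ n, u i * z i| ≤ ε' * K * (n:ℝ)^(1+θ) := by
      calc |∑ i ∈ Finset.Ioc N₀ n, u i * z i| ≤ ∑ i ∈ Finset.Ioc N₀ n, |u i * z i| :=
        Finset.abs_sum_le_sum_abs _ _
      _ ≤ ∑ i ∈ Finset.Ioc N₀ n, K * (n:ℝ)^θ * ε' := by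
          apply Finset.sum_le_sum
          intro i hi
          obtain ⟨hi1, hi2⟩ := Finset.mem_Ioc.1 hi
          rw [abs_mul]
          have hui : |u i| ≤ K * (n:ℝ)^θ := by
            refine (hu i ((Nat.zero_le N₀).trans_lt hi1)).trans ?_
            exact mul_le_mul_of_nonneg_left
              (Real.rpow_le_rpow (by positivity) (by exact_mod_cast hi2) hθ0.le) hK
          have hzi : |z i| ≤ ε' := by
            have h8 := hN₀ i hi1.le
            rw [Real.dist_eq, sub_zero] at h8
            exact h8.le
          exact mul_le_mul hui hzi (abs_nonneg _) (by positivity)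
      _ = ((Finset.Ioc N₀ n).card : ℝ) * (K * (n:ℝ)^θ * ε') := by
          rw [Finset.sum_const, nsmul_eq_mul]
      _ ≤ (n:ℝ) * (K * (n:ℝ)^θ * ε') := by
          apply mul_le_mul_of_nonneg_right _ (by positivity)
          rw [Nat.card_Ioc]; exact_mod_cast Nat.sub_le n N₀
      _ = ε' * K * (n:ℝ)^(1+θ) := by
          rw [Real.rpow_add hn', Real.rpow_one]; ring
    calc |∑ i ∈ Finset.Ioc 0 N₀, u i * z i + ∑ i ∈ Finset.Ioc N₀ n, u i * z i|
        ≤ |∑ i ∈ Finset.Ioc 0 N₀, u i * z i| + |∑ i ∈ Finset.Ioc N₀ n, u i * z i| :=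
          abs_add_le _ _
    _ ≤ B + ε' * K * (n:ℝ)^(1+θ) := add_le_add h1 h2
  have hεK : ε' * K ≤ ε / 2 := by
    rw [hε'def, div_mul_eq_mul_div, div_le_div_iff₀ (by positivity) (by norm_num)]
    nlinarith
  rw [Real.norm_eq_abs, abs_div, abs_of_pos hp, div_lt_iff₀ hp]
  calc |∑ i ∈ Finset.Icc 1 n, u i * z i| ≤ B + ε' * K * (n:ℝ)^(1+θ) := hbound
  _ < ε/2 * (n:ℝ)^(1+θ) + ε/2 * (n:ℝ)^(1+θ) := by
      apply add_lt_add_of_lt_of_le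
      · exact (div_lt_iff₀ hp).1 hn1
      · exact mul_le_mul_of_nonneg_right hεK hp.le
  _ = ε * (n:ℝ)^(1+θ) := by ring

private lemma key_lemma (θ T₀ c L : ℝ) (hθ0 : 0 < θ) (hθ1 : θ < 1) (hT₀ : 0 < T₀)
    (x : ℕ → ℝ)
    (hx : Tendsto (fun n : ℕ => (n:ℝ)^(1-θ) * (x n / ((n:ℝ) + T₀) - c)) atTop (nhds L)) :
    Tendsto (fun n : ℕ => (n:ℝ)^(1-θ) *
        ((1/(n:ℝ) * ∑ i ∈ Finset.Icc 1 n, (2 * x i - ((i:ℝ) + T₀)))/(n:ℝ) - (c - 1/2)))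
      atTop (nhds (2*L/(1+θ))) := by
  set y : ℕ → ℝ := fun i => (i:ℝ)^(1-θ) * (x i / ((i:ℝ) + T₀) - c) with hy
  set w : ℕ → ℝ := fun i => 2*((i:ℝ)+T₀) * (i:ℝ)^(θ-1) with hw
  have hterm : ∀ i : ℕ, 1 ≤ i →
      2 * x i - ((i:ℝ) + T₀) = (2*c-1)*((i:ℝ)+T₀) + w i * y i := by
    intro i hi
    have hi' : (0:ℝ) < (i:ℝ) := by exact_mod_cast hi
    have hiT : (0:ℝ) < (i:ℝ) + T₀ := by linarith
    have hprod : (i:ℝ)^(θ-1) * (i:ℝ)^(1-θ) = 1 := by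
      rw [← Real.rpow_add hi']
      norm_num
    have hwy : w i * y i = 2*((i:ℝ)+T₀) * (x i / ((i:ℝ) + T₀) - c) := by
      rw [hw, hy]
      simp only
      calc 2*((i:ℝ)+T₀) * (i:ℝ)^(θ-1) * ((i:ℝ)^(1-θ) * (x i / ((i:ℝ) + T₀) - c))
          = 2*((i:ℝ)+T₀) * ((i:ℝ)^(θ-1) * (i:ℝ)^(1-θ)) * (x i / ((i:ℝ) + T₀) - c) := by
            ring
      _ = 2*((i:ℝ)+T₀) * (x i / ((i:ℝ) + T₀) - c) := by rw [hprod]; ring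
    rw [hwy]
    field_simp
    ring
  have hgauss : ∀ n : ℕ, ∑ i ∈ Finset.Icc 1 n, (i:ℝ) = (n:ℝ)*((n:ℝ)+1)/2 := by
    intro n
    induction n with
    | zero => simp
    | succ m ih =>
      rw [Finset.sum_Icc_succ_top (Nat.le_add_left 1 m), ih]
      push_cast
      ring
  have hsum_lin : ∀ n : ℕ,
      ∑ i ∈ Finset.Icc 1 n, ((i:ℝ)+T₀) = (n:ℝ)*((n:ℝ)+1)/2 + (n:ℝ)*T₀ := by
    intro n
    rw [Finset.sum_add_distrib, Finset.sum_const, Nat.card_Icc, nsmul_eq_mul, hgauss]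
    simp
  set S : ℕ → ℝ := fun n => ∑ i ∈ Finset.Icc 1 n, w i * y i with hS
  set A : ℝ := (2*c-1)*(1/2+T₀) with hA
  have heq : ∀ᶠ n : ℕ in atTop,
      (n:ℝ)^(1-θ) *
        ((1/(n:ℝ) * ∑ i ∈ Finset.Icc 1 n, (2 * x i - ((i:ℝ) + T₀)))/(n:ℝ) - (c - 1/2))
      = A * (n:ℝ)^(-θ) + S n / (n:ℝ)^(1+θ) := by
    filter_upwards [eventually_ge_atTop 1] with n hn
    have hn' : (0:ℝ) < (n:ℝ) := by exact_mod_cast hn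
    have hSig : ∑ i ∈ Finset.Icc 1 n, (2 * x i - ((i:ℝ) + T₀))
        = (2*c-1)*((n:ℝ)*((n:ℝ)+1)/2 + (n:ℝ)*T₀) + S n := by
      have e1 : ∑ i ∈ Finset.Icc 1 n, (2 * x i - ((i:ℝ) + T₀))
          = ∑ i ∈ Finset.Icc 1 n, ((2*c-1)*((i:ℝ)+T₀) + w i * y i) :=
        Finset.sum_congr rfl fun i hi => hterm i (Finset.mem_Icc.1 hi).1
      rw [e1, Finset.sum_add_distrib, ← Finset.mul_sum, hsum_lin]
    rw [hSig]
    have hp : (0:ℝ) < (n:ℝ)^θ := Real.rpow_pos_of_pos hn' _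
    have h1 : (n:ℝ)^(1-θ) = (n:ℝ) / (n:ℝ)^θ := by
      rw [Real.rpow_sub hn', Real.rpow_one]
    have h2 : (n:ℝ)^(-θ) = 1 / (n:ℝ)^θ := by
      rw [Real.rpow_neg hn'.le, one_div]
    have h3 : (n:ℝ)^(1+θ) = (n:ℝ) * (n:ℝ)^θ := by
      rw [Real.rpow_add hn', Real.rpow_one]
    rw [h1, h2, h3, hA]
    field_simp
    ring
  have hz : Tendsto (fun i : ℕ => y i - L) atTop (nhds 0) := by
    have := hx.sub_const L
    rw [sub_self] at this
    exact this
  have hwbound : ∀ i : ℕ, 1 ≤ i → |w i| ≤ (2*(1+T₀)) * (i:ℝ)^θ := by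
    intro i hi
    have hi' : (0:ℝ) < (i:ℝ) := by exact_mod_cast hi
    have hi1 : (1:ℝ) ≤ (i:ℝ) := by exact_mod_cast hi
    have hq : (0:ℝ) < (i:ℝ)^(θ-1) := Real.rpow_pos_of_pos hi' _
    have hpos : 0 ≤ w i := by
      rw [hw]; positivity
    rw [abs_of_nonneg hpos, hw]
    have hiθ : (i:ℝ) * (i:ℝ)^(θ-1) = (i:ℝ)^θ := by
      nth_rewrite 1 [← Real.rpow_one (i:ℝ)]
      rw [← Real.rpow_add hi']
      norm_num
    calc 2*((i:ℝ)+T₀) * (i:ℝ)^(θ-1) ≤ 2*((i:ℝ)*(1+T₀)) * (i:ℝ)^(θ-1) := by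
          apply mul_le_mul_of_nonneg_right _ hq.le
          nlinarith
    _ = (2*(1+T₀)) * ((i:ℝ) * (i:ℝ)^(θ-1)) := by ring
    _ = (2*(1+T₀)) * (i:ℝ)^θ := by rw [hiθ]
  have limit1 : Tendsto
      (fun n : ℕ => (∑ i ∈ Finset.Icc 1 n, w i * (y i - L)) / (n:ℝ)^(1+θ))
      atTop (nhds 0) :=
    aux_toeplitz_zero θ hθ0 (2*(1+T₀)) (by linarith) w _ hwbound hz
  have limit2 : Tendsto (fun n : ℕ => (∑ i ∈ Finset.Icc 1 n, w i) / (n:ℝ)^(1+θ))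
      atTop (nhds (2/(1+θ))) := by
    have hdecomp : ∀ n : ℕ, ∑ i ∈ Finset.Icc 1 n, w i
        = 2 * (∑ i ∈ Finset.Icc 1 n, (i:ℝ)^θ)
          + ∑ i ∈ Finset.Icc 1 n, (2*T₀*(i:ℝ)^(θ-1)) := by
      intro n
      rw [Finset.mul_sum, ← Finset.sum_add_distrib]
      apply Finset.sum_congr rfl
      intro i hi
      have hi1 : 1 ≤ i := (Finset.mem_Icc.1 hi).1
      have hi' : (0:ℝ) < (i:ℝ) := by exact_mod_cast hi1
      have hiθ : (i:ℝ) * (i:ℝ)^(θ-1) = (i:ℝ)^θ := by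
        nth_rewrite 1 [← Real.rpow_one (i:ℝ)]
        rw [← Real.rpow_add hi']
        norm_num
      rw [hw]
      simp only
      rw [← hiθ]
      ring
    have t1 : Tendsto (fun n : ℕ => 2 * ((∑ i ∈ Finset.Icc 1 n, (i:ℝ)^θ) / (n:ℝ)^(1+θ)))
        atTop (nhds (2 * (1/(1+θ)))) := (aux_sum_pow θ hθ0).const_mul 2
    have t2 : Tendsto
        (fun n : ℕ => (∑ i ∈ Finset.Icc 1 n, (2*T₀*(i:ℝ)^(θ-1))) / (n:ℝ)^(1+θ))
        atTop (nhds 0) := by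
      apply aux_small θ hθ0 (2*T₀)
      intro i hi
      have hi1 : (1:ℝ) ≤ (i:ℝ) := by exact_mod_cast hi
      have hle : (i:ℝ)^(θ-1) ≤ 1 :=
        Real.rpow_le_one_of_one_le_of_nonpos hi1 (by linarith)
      have h0 : (0:ℝ) ≤ (i:ℝ)^(θ-1) := (Real.rpow_pos_of_pos (by linarith) _).le
      rw [abs_of_nonneg (by positivity)]
      nlinarith
    have hadd := t1.add t2
    rw [add_zero] at hadd
    have hval : 2 * (1/(1+θ)) = 2/(1+θ) := by ring
    rw [hval] at hadd
    refine hadd.congr (fun n => ?_)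
    rw [hdecomp n, add_div, mul_div_assoc]
  have limitS : Tendsto (fun n : ℕ => S n / (n:ℝ)^(1+θ)) atTop
      (nhds (L * (2/(1+θ)))) := by
    have hdec : ∀ n : ℕ, S n / (n:ℝ)^(1+θ)
        = (∑ i ∈ Finset.Icc 1 n, w i * (y i - L)) / (n:ℝ)^(1+θ)
          + L * ((∑ i ∈ Finset.Icc 1 n, w i) / (n:ℝ)^(1+θ)) := by
      intro n
      have e : S n = (∑ i ∈ Finset.Icc 1 n, w i * (y i - L))
          + L * ∑ i ∈ Finset.Icc 1 n, w i := by
        rw [hS, Finset.mul_sum, ← Finset.sum_add_distrib]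
        apply Finset.sum_congr rfl
        intro i _
        ring
      rw [e, add_div, mul_div_assoc]
    have hadd2 := limit1.add (limit2.const_mul L)
    rw [zero_add] at hadd2
    refine hadd2.congr (fun n => ?_)
    exact (hdec n).symm
  have limA : Tendsto (fun n : ℕ => A * (n:ℝ)^(-θ)) atTop (nhds 0) := by
    simpa using (aux_rpow_neg_lim θ hθ0).const_mul A
  have htend := limA.add limitS
  rw [zero_add] at htend
  have hval2 : L * (2/(1+θ)) = 2*L/(1+θ) := by ring
  rw [hval2] at htend
  exact Filter.Tendsto.congr' (Filter.EventuallyEq.symm heq) htend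

theorem average_difference_supercritical
    {Ω : Type*} [MeasurableSpace Ω] (μ : Measure Ω) [IsProbabilityMeasure μ]
    (N : ℕ → Ω → ℝ) (W : Ω → ℝ) (a θ T₀ : ℝ)
    (hT₀ : 0 < T₀) (hθ : θ ∈ Set.Ioo (1/2 : ℝ) 1) (ha : a ∈ Set.Ioo (0:ℝ) 1)
    (T : ℕ → ℝ) (hT : ∀ n, T n = n + T₀)
    (M : ℕ → Ω → ℝ) (hM : ∀ n ω, M n ω = T n - N n ω)
    (C : ℕ → Ω → ℝ)
    (hC : ∀ n ω, C n ω = (1 / n) * ∑ i ∈ Finset.Icc 1 n, (N i ω - M i ω))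
    (hW : ∀ᵐ ω ∂μ, Tendsto
      (fun n : ℕ => (n : ℝ) ^ (1 - θ) * (N n ω / T n - a / (1 - θ)))
      atTop (nhds (W ω))) :
    ∀ᵐ ω ∂μ, Tendsto
      (fun n : ℕ => (n : ℝ) ^ (1 - θ) * (C n ω / n - (a / (1 - θ) - 1 / 2)))
      atTop (nhds (2 * W ω / (1 + θ))) := by
  have hθ0 : 0 < θ := lt_trans (by norm_num) hθ.1
  filter_upwards [hW] with ω hω
  have hx : Tendsto (fun n : ℕ => (n:ℝ)^(1-θ) * (N n ω / ((n:ℝ) + T₀) - a/(1-θ)))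
      atTop (nhds (W ω)) := by
    refine hω.congr (fun n => ?_)
    rw [hT]
  have h := key_lemma θ T₀ (a/(1-θ)) (W ω) hθ0 hθ.2 hT₀ (fun n => N n ω) hx
  refine h.congr (fun n => ?_)
  congr 1
  congr 1
  congr 1
  rw [hC]
  congr 1
  apply Finset.sum_congr rfl
  intro i _
  rw [hM, hT]
  ring
end
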